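/- For every natural number n ≥ 2, the identity 2^{n−1}·n! + ∑_{t=1}^{⌊n/2⌋} (n! / (t! · (n−2t)!))² · 2^{n−2t} · (n−2t)! + ∑_{t=1}^{⌊n/2⌋} (n! / (2^t · t! · (n−2t)!))² · (n−2t)! = (2^n + 1) · ∏_{m=1}^{n}(2m−1) − (2^{n−1} + 1) · n! holds. -/

import Mathlib

noncomputable def Tq (n t : ℕ) : ℚ :=
  (n.factorial : ℚ)^2 / (4^t * (t.factorial : ℚ)^2 * ((n - 2*t).factorial : ℚ))

noncomputable def Gq (n t : ℕ) : ℚ :=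
  -4 * t^2 * (n.factorial : ℚ)^2 / (4^t * (t.factorial : ℚ)^2 * ((n + 1 - 2*t).factorial : ℚ))

lemma fact_ne (k : ℕ) : ((k.factorial : ℚ)) ≠ 0 := by
  exact_mod_cast k.factorial_ne_zero

lemma tele (n t : ℕ) (h : 2*t + 2 ≤ n) :
    Tq (n+1) t - (2*n+1) * Tq n t = Gq n (t+1) - Gq n t := by
  obtain ⟨k, rfl⟩ : ∃ k, n = 2*t+2+k := ⟨n - (2*t+2), by omega⟩
  simp only [Tq, Gq]
  have e1 : 2*t+2+k+1 - 2*t = (k+2)+1 := by omega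
  have e2 : 2*t+2+k - 2*t = (k+1)+1 := by omega
  have e3 : 2*t+2+k+1 - 2*(t+1) = k+1 := by omega
  rw [e1, e2, e3, show (2*t+2+k+1) = (2*t+2+k)+1 from rfl,
    Nat.factorial_succ (2*t+2+k), Nat.factorial_succ (k+2), Nat.factorial_succ (k+1),
    Nat.factorial_succ t]
  have h1 := fact_ne (k+1)
  have h2 := fact_ne t
  have h3 := fact_ne (2*t+2+k)
  have h4 : (4:ℚ)^t ≠ 0 := by positivity
  push_cast
  field_simp
  ring

lemma tele_even (m : ℕ) :
    Tq (2*m+1) m - (2*((2*m : ℕ) : ℚ)+1) * Tq (2*m) m = - Gq (2*m) m := by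
  simp only [Tq, Gq, show 2*m+1 - 2*m = 1 from by omega, show 2*m - 2*m = 0 from by omega,
    Nat.factorial_succ (2*m), Nat.factorial_zero, Nat.factorial_one]
  have h2 := fact_ne m
  have h3 := fact_ne (2*m)
  have h4 : (4:ℚ)^m ≠ 0 := by positivity
  push_cast
  field_simp
  ring

lemma tele_odd (m : ℕ) :
    Tq (2*m+2) m - (2*((2*m+1 : ℕ) : ℚ)+1) * Tq (2*m+1) m
      = Gq (2*m+1) (m+1) - Gq (2*m+1) m := by
  simp only [Tq, Gq, show 2*m+2 - 2*m = 2 from by omega, show 2*m+1 - 2*m = 1 from by omega,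
    show 2*m+1+1 - 2*m = 2 from by omega, show 2*m+1+1 - 2*(m+1) = 0 from by omega,
    show 2*m+2 = (2*m+1)+1 from rfl, Nat.factorial_succ (2*m+1), Nat.factorial_succ m,
    Nat.factorial_zero, Nat.factorial_one, Nat.factorial_two]
  have h2 := fact_ne m
  have h3 := fact_ne (2*m+1)
  have h4 : (4:ℚ)^m ≠ 0 := by positivity
  push_cast
  field_simp
  ring

lemma top_odd (m : ℕ) :
    Tq (2*m+1+1) (m+1) = - Gq (2*m+1) (m+1) := by
  simp only [Tq, Gq, show 2*m+1+1 - 2*(m+1) = 0 from by omega,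
    show 2*m+1+1 = (2*m+1)+1 from rfl, Nat.factorial_succ (2*m+1), Nat.factorial_succ m,
    Nat.factorial_zero]
  have h2 := fact_ne m
  have h3 := fact_ne (2*m+1)
  have h4 : (4:ℚ)^m ≠ 0 := by positivity
  push_cast
  field_simp
  ring

lemma Gq_zero (n : ℕ) : Gq n 0 = 0 := by simp [Gq]

lemma Drec (n : ℕ) :
    ∑ t ∈ Finset.range ((n+1)/2+1), Tq (n+1) t
      = (2*(n:ℚ)+1) * ∑ t ∈ Finset.range (n/2+1), Tq n t := by
  rcases Nat.even_or_odd n with ⟨m, hm⟩ | ⟨m, hm⟩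
  · have hm' : n = 2*m := by omega
    subst hm'
    rw [show (2*m+1)/2 = m from by omega, show (2*m)/2 = m from by omega,
      Finset.mul_sum, ← sub_eq_zero, ← Finset.sum_sub_distrib, Finset.sum_range_succ]
    have step : ∑ t ∈ Finset.range m,
        (Tq (2*m+1) t - (2*((2*m:ℕ):ℚ)+1) * Tq (2*m) t)
        = Gq (2*m) m - Gq (2*m) 0 := by
      rw [Finset.sum_congr rfl (fun t ht => tele (2*m) t (by
        simp only [Finset.mem_range] at ht; omega))]
      exact Finset.sum_range_sub (fun t => Gq (2*m) t) m
    have bd := tele_even m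
    rw [Gq_zero] at step
    push_cast at step bd ⊢
    linarith [step, bd]
  · have hm' : n = 2*m+1 := by omega
    subst hm'
    rw [show (2*m+1+1)/2 = m+1 from by omega, show (2*m+1)/2 = m from by omega,
      ← sub_eq_zero, Finset.sum_range_succ (fun t => Tq (2*m+1+1) t) (m+1)]
    have key : ∑ t ∈ Finset.range (m+1),
          (Tq (2*m+1+1) t - (2*((2*m+1 : ℕ) : ℚ)+1) * Tq (2*m+1) t)
        = Gq (2*m+1) (m+1) - Gq (2*m+1) 0 := by
      rw [Finset.sum_congr rfl (fun t ht => ?_)]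
      · exact Finset.sum_range_sub (fun t => Gq (2*m+1) t) (m+1)
      · simp only [Finset.mem_range] at ht
        rcases Nat.lt_succ_iff_lt_or_eq.mp ht with h | rfl
        · have h5 := tele (2*m+1) t (by omega)
          push_cast at h5 ⊢
          linarith [h5]
        · exact tele_odd t
    rw [Finset.sum_sub_distrib, ← Finset.mul_sum, Gq_zero] at key
    have h2 := top_odd m
    push_cast at key h2 ⊢
    linarith [key, h2]

lemma Dval (n : ℕ) :
    ∑ t ∈ Finset.range (n/2+1), Tq n t = ∏ m ∈ Finset.range n, (2*(m:ℚ)+1) := by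
  induction n with
  | zero => simp [Tq]
  | succ n ih =>
      rw [Drec, ih, Finset.prod_range_succ]
      ring

lemma pow_fact_dvd (t : ℕ) : 2^t * t.factorial ∣ (2*t).factorial := by
  induction t with
  | zero => simp
  | succ t ih =>
      have h1 : 2*(t+1) = (2*t+1)+1 := by omega
      rw [h1, Nat.factorial_succ, Nat.factorial_succ, Nat.factorial_succ]
      have h2 : 2^(t+1) * ((t+1) * t.factorial) = (2*t+1+1) * (2^t * t.factorial) := by ring
      rw [h2]
      exact Nat.mul_dvd_mul dvd_rfl (ih.mul_left _)

lemma dvd1 (n t : ℕ) (h : 2*t ≤ n) : t.factorial * (n - 2*t).factorial ∣ n.factorial := by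
  calc t.factorial * (n - 2*t).factorial
      ∣ (2*t).factorial * (n - 2*t).factorial :=
        Nat.mul_dvd_mul (Nat.factorial_dvd_factorial (by omega)) dvd_rfl
    _ ∣ n.factorial := Nat.factorial_mul_factorial_dvd_factorial h

lemma dvd2 (n t : ℕ) (h : 2*t ≤ n) : 2^t * t.factorial * (n - 2*t).factorial ∣ n.factorial := by
  calc 2^t * t.factorial * (n - 2*t).factorial
      ∣ (2*t).factorial * (n - 2*t).factorial := Nat.mul_dvd_mul (pow_fact_dvd t) dvd_rfl
    _ ∣ n.factorial := Nat.factorial_mul_factorial_dvd_factorial h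

lemma cast2 (n t : ℕ) (h : 2*t ≤ n) :
    ((n.factorial / (2^t * t.factorial * (n - 2*t).factorial) : ℕ) : ℚ)^2
      * ((n - 2*t).factorial : ℚ) = Tq n t := by
  rw [Nat.cast_div (dvd2 n t h) (by
    push_cast
    exact mul_ne_zero (mul_ne_zero (by positivity) (fact_ne t)) (fact_ne _))]
  simp only [Tq]
  have hF := fact_ne (n - 2*t)
  have ht := fact_ne t
  have h4 : (2:ℚ)^t ≠ 0 := by positivity
  push_cast
  field_simp
  rw [show (4:ℚ)^t = 2^(t*2) from by
    rw [show (4:ℚ) = 2^2 from by norm_num, ← pow_mul, mul_comm]]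
  ring

lemma cast1 (n t : ℕ) (h : 2*t ≤ n) :
    ((n.factorial / (t.factorial * (n - 2*t).factorial) : ℕ) : ℚ)^2
      * 2^(n - 2*t) * ((n - 2*t).factorial : ℚ) = 2^n * Tq n t := by
  rw [Nat.cast_div (dvd1 n t h) (by
    push_cast
    exact mul_ne_zero (fact_ne t) (fact_ne _))]
  simp only [Tq]
  have hF := fact_ne (n - 2*t)
  have ht := fact_ne t
  have h4 : (2:ℚ) ^ (n - 2*t) * 4^t = 2^n := by
    rw [show (4:ℚ) = 2^2 from by norm_num, ← pow_mul, ← pow_add]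
    congr 1
    omega
  push_cast
  field_simp
  rw [← h4]

lemma hD (n : ℕ) : ∑ t ∈ Finset.Icc 1 (n/2), Tq n t
    = (∏ m ∈ Finset.range n, (2*(m:ℚ)+1)) - (n.factorial : ℚ) := by
  have h0 : Finset.range (n/2+1) = insert 0 (Finset.Icc 1 (n/2)) := by
    ext x; simp only [Finset.mem_range, Finset.mem_insert, Finset.mem_Icc]; omega
  have hd := Dval n
  rw [h0, Finset.sum_insert (by simp)] at hd
  have hT0 : Tq n 0 = (n.factorial : ℚ) := by
    simp only [Tq, pow_zero, Nat.factorial_zero, Nat.cast_one, one_pow, mul_zero,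
      Nat.sub_zero, one_mul]
    rw [sq, mul_div_assoc, div_self (fact_ne n), mul_one]
  rw [hT0] at hd
  linarith [hd]

/-- For every `n ≥ 2`,
`2^{n−1}·n! + ∑_{t=1}^{⌊n/2⌋} (n!/(t!·(n−2t)!))²·2^{n−2t}·(n−2t)!`
`+ ∑_{t=1}^{⌊n/2⌋} (n!/(2^t·t!·(n−2t)!))²·(n−2t)! = (2^n + 1)·∏_{m=1}^{n}(2m−1) − (2^{n−1} + 1)·n!`
(the natural-number quotients appearing here are exact; the identity is stated in `ℤ`). -/
theorem brauer_D_dimension_identity (n : ℕ) (hn : 2 ≤ n) :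
    2 ^ (n - 1) * (n.factorial : ℤ) +
      (∑ t ∈ Finset.Icc 1 (n / 2),
        ((n.factorial / (t.factorial * (n - 2 * t).factorial) : ℕ) : ℤ) ^ 2 *
          2 ^ (n - 2 * t) * ((n - 2 * t).factorial : ℤ)) +
      (∑ t ∈ Finset.Icc 1 (n / 2),
        ((n.factorial / (2 ^ t * t.factorial * (n - 2 * t).factorial) : ℕ) : ℤ) ^ 2 *
          ((n - 2 * t).factorial : ℤ)) =
    (2 ^ n + 1) * ∏ m ∈ Finset.range n, (2 * (m : ℤ) + 1) -
      (2 ^ (n - 1) + 1) * (n.factorial : ℤ) := by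
  have key : (2:ℚ) ^ (n - 1) * (n.factorial : ℚ) +
      (∑ t ∈ Finset.Icc 1 (n / 2),
        ((n.factorial / (t.factorial * (n - 2 * t).factorial) : ℕ) : ℚ) ^ 2 *
          2 ^ (n - 2 * t) * ((n - 2 * t).factorial : ℚ)) +
      (∑ t ∈ Finset.Icc 1 (n / 2),
        ((n.factorial / (2 ^ t * t.factorial * (n - 2 * t).factorial) : ℕ) : ℚ) ^ 2 *
          ((n - 2 * t).factorial : ℚ)) =
    (2 ^ n + 1) * ∏ m ∈ Finset.range n, (2 * (m : ℚ) + 1) -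
      (2 ^ (n - 1) + 1) * (n.factorial : ℚ) := by
    rw [Finset.sum_congr rfl (fun t ht => cast1 n t (by
        simp only [Finset.mem_Icc] at ht; omega)),
      Finset.sum_congr rfl (fun t ht => cast2 n t (by
        simp only [Finset.mem_Icc] at ht; omega)),
      ← Finset.mul_sum, hD]
    have h2n : (2:ℚ)^n = 2^(n-1)*2 := by
      rw [← pow_succ, show n-1+1 = n from by omega]
    rw [h2n]
    ring
  have key2 : ((2 ^ (n - 1) * (n.factorial : ℤ) +
      (∑ t ∈ Finset.Icc 1 (n / 2),
        ((n.factorial / (t.factorial * (n - 2 * t).factorial) : ℕ) : ℤ) ^ 2 *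
          2 ^ (n - 2 * t) * ((n - 2 * t).factorial : ℤ)) +
      (∑ t ∈ Finset.Icc 1 (n / 2),
        ((n.factorial / (2 ^ t * t.factorial * (n - 2 * t).factorial) : ℕ) : ℤ) ^ 2 *
          ((n - 2 * t).factorial : ℤ)) : ℤ) : ℚ) =
      (((2 ^ n + 1) * ∏ m ∈ Finset.range n, (2 * (m : ℤ) + 1) -
      (2 ^ (n - 1) + 1) * (n.factorial : ℤ) : ℤ) : ℚ) := by
    simp only [Int.cast_add, Int.cast_mul, Int.cast_sum, Int.cast_sub, Int.cast_pow,
      Int.cast_prod, Int.cast_natCast, Int.cast_one, Int.cast_ofNat, Int.cast_two]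
    exact key
  exact Int.cast_injective key2
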